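/- For p ∈ (1,∞) let d_p := π_p/(π_p^p + 1)^{1/p}, where π_p := 2π(p−1)^{1/p}/(p·sin(π/p)). Then 2/3 < d_p < 1, and moreover d^{2−p} ≥ 2/3 for every d ∈ [d_p, 1]. -/

import Mathlib

open Filter Topology

/-- `π_p := 2π (p-1)^{1/p} / (p sin(π/p))`. -/
noncomputable def piP (p : ℝ) : ℝ :=
  2 * Real.pi * (p - 1) ^ (1 / p) / (p * Real.sin (Real.pi / p))

/-- `d_p := π_p / (π_p^p + 1)^{1/p}`, characterized by `(π_p/d_p)^p = π_p^p + 1`. -/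
noncomputable def dP (p : ℝ) : ℝ := piP p / (piP p ^ p + 1) ^ (1 / p)

/-!
Since `sin x ≤ x` and `sin (π/p) = sin (π (p-1)/p)`, we get `p sin(π/p) ≤ π min(1, p-1)`, and
`min(1, p-1) ≤ (p-1)^{1/p}`; hence `π_p ≥ 2`. Then `d_p^p = π_p^p/(π_p^p + 1) ∈ [2/3, 1)`, and
`(2/3)^p < 2/3` gives `2/3 < d_p < 1`. Finally `d ≤ d^{2-p}` on `(0, 1]` because `2 - p < 1`.
-/

open Real

lemma mul_sin_pi_div_le_pi {p : ℝ} (hp : 0 < p) : p * sin (π / p) ≤ π :=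
  calc p * sin (π / p) ≤ p * (π / p) := by gcongr; exact sin_le (by positivity)
    _ = π := mul_div_cancel₀ _ hp.ne'

lemma mul_sin_pi_div_le_pi_mul_sub_one {p : ℝ} (hp : 1 ≤ p) :
    p * sin (π / p) ≤ π * (p - 1) := by
  have hp0 : 0 < p := by linarith
  have hp1 : 0 ≤ p - 1 := by linarith
  have hcompl : π / p = π - π * (p - 1) / p := by field_simp; ring
  calc p * sin (π / p) = p * sin (π * (p - 1) / p) := by rw [hcompl, sin_pi_sub]
    _ ≤ p * (π * (p - 1) / p) := by gcongr; exact sin_le (by positivity)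
    _ = π * (p - 1) := mul_div_cancel₀ _ hp0.ne'

lemma mul_sin_pi_div_le_pi_mul_rpow {p : ℝ} (hp : 1 < p) :
    p * sin (π / p) ≤ π * (p - 1) ^ (1 / p) := by
  rcases le_total 2 p with h2 | h2
  · calc p * sin (π / p) ≤ π := mul_sin_pi_div_le_pi (by linarith)
      _ ≤ π * (p - 1) ^ (1 / p) :=
        le_mul_of_one_le_right pi_pos.le (one_le_rpow (by linarith) (by positivity))
  · calc p * sin (π / p) ≤ π * (p - 1) := mul_sin_pi_div_le_pi_mul_sub_one hp.le
      _ ≤ π * (p - 1) ^ (1 / p) := by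
        gcongr
        exact self_le_rpow_of_le_one (by linarith) (by linarith)
          (by rw [div_le_one (by linarith)]; exact hp.le)

lemma two_le_piP {p : ℝ} (hp : 1 < p) : 2 ≤ piP p := by
  have hsin : 0 < p * sin (π / p) :=
    mul_pos (by linarith) (sin_pos_of_pos_of_lt_pi (by positivity) (div_lt_self pi_pos hp))
  rw [piP, le_div_iff₀ hsin]
  linarith [mul_sin_pi_div_le_pi_mul_rpow hp]

lemma dP_nonneg {p : ℝ} (hp : 1 < p) : 0 ≤ dP p := by
  have := two_le_piP hp
  unfold dP
  positivity

lemma dP_rpow {p : ℝ} (hp : 1 < p) : dP p ^ p = piP p ^ p / (piP p ^ p + 1) := by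
  have hpi : 0 ≤ piP p := by linarith [two_le_piP hp]
  rw [dP, div_rpow hpi (by positivity), one_div, rpow_inv_rpow (by positivity) (by linarith)]

lemma two_thirds_le_dP_rpow {p : ℝ} (hp : 1 < p) : 2 / 3 ≤ dP p ^ p := by
  have hx : 2 ≤ piP p ^ p :=
    calc (2 : ℝ) ≤ 2 ^ p := self_le_rpow_of_one_le (by norm_num) hp.le
      _ ≤ piP p ^ p := rpow_le_rpow (by norm_num) (two_le_piP hp) (by linarith)
  rw [dP_rpow hp, le_div_iff₀ (by linarith)]
  linarith

lemma dP_lt_one {p : ℝ} (hp : 1 < p) : dP p < 1 := by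
  have hx : 0 < piP p ^ p + 1 := by positivity [two_le_piP hp]
  rw [← rpow_lt_rpow_iff (dP_nonneg hp) zero_le_one (by linarith : (0 : ℝ) < p), one_rpow, dP_rpow hp,
    div_lt_one hx]
  linarith

lemma two_thirds_lt_dP {p : ℝ} (hp : 1 < p) : 2 / 3 < dP p := by
  rw [← rpow_lt_rpow_iff (by norm_num) (dP_nonneg hp) (by linarith : (0 : ℝ) < p)]
  exact (rpow_lt_self_of_lt_one (by norm_num) (by norm_num) hp).trans_le
    (two_thirds_le_dP_rpow hp)

/-- Remark 4.3: `2/3 < d_p < 1`, and `d^{2-p} ≥ 2/3` for every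
`d ∈ [d_p, 1]`. -/
theorem stmt18 (p : ℝ) (hp : 1 < p) :
    2 / 3 < dP p ∧ dP p < 1 ∧ ∀ d ∈ Set.Icc (dP p) 1, d ^ (2 - p) ≥ 2 / 3 := by
  refine ⟨two_thirds_lt_dP hp, dP_lt_one hp, fun d ⟨hd_ge, hd_le⟩ => ?_⟩
  calc 2 / 3 ≤ dP p := (two_thirds_lt_dP hp).le
    _ ≤ d := hd_ge
    _ ≤ d ^ (2 - p) := self_le_rpow_of_le_one (by linarith [dP_nonneg hp]) hd_le (by linarith)
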